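/- arXiv:2205.14426 — 7 statements merged into one kernel-verified Lean document; each statement's English description precedes it below -/
import Mathlib

section
/- Let K be a division ring, σ an involutory anti-automorphism of K, and ε ∈ {1, −1}. Then K_{σ,ε} = {0} if and only if (σ, ε) = (id, 1), and K_{σ,ε} = K if and only if (σ, ε) = (id, −1) and char(K) ≠ 2. -/
/-- `K_{σ,ε} = {0}` iff `(σ, ε) = (id, 1)`, and `K_{σ,ε} = K` iff
`(σ, ε) = (id, -1)` and `char K ≠ 2`. -/
theorem stmt2 (K : Type*) [DivisionRing K] (σ : K → K)
    (hadd : ∀ x y : K, σ (x + y) = σ x + σ y)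
    (hmul : ∀ x y : K, σ (x * y) = σ y * σ x)
    (hinv : ∀ x : K, σ (σ x) = x)
    (ε : K) (hε : ε = 1 ∨ ε = -1) :
    ({x : K | ∃ t : K, x = t - σ t * ε} = {(0 : K)} ↔ (σ = id ∧ ε = 1)) ∧
    ({x : K | ∃ t : K, x = t - σ t * ε} = Set.univ ↔
      (σ = id ∧ ε = -1 ∧ (2 : K) ≠ 0)) := by
  have h0 : σ 0 = 0 := by
    have h := hadd 0 0
    rw [add_zero] at h
    exact left_eq_add.mp h
  have h1 : σ 1 = 1 := by
    have h := hmul 1 1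
    rw [mul_one] at h
    have hne : σ 1 ≠ 0 := fun hh => one_ne_zero (by rw [← hinv 1, hh, h0])
    exact mul_left_cancel₀ hne (by rw [← h, mul_one])
  have hneg : ∀ x : K, σ (-x) = -σ x := by
    intro x
    have h2 := hadd x (-x)
    rw [add_neg_cancel, h0] at h2
    have := neg_eq_of_add_eq_zero_right h2.symm
    rw [← this]
  rcases hε with rfl | rfl
  · -- ε = 1
    constructor
    · constructor
      · intro h
        refine ⟨funext fun t => ?_, rfl⟩
        have ht : (t - σ t * 1) ∈ ({(0 : K)} : Set K) := h ▸ ⟨t, rfl⟩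
        simp only [Set.mem_singleton_iff, mul_one, sub_eq_zero] at ht
        simpa using ht.symm
      · rintro ⟨rfl, -⟩
        ext x
        simp [sub_self, eq_comm]
    · constructor
      · intro h
        exfalso
        -- every x satisfies σ x = -x
        have key : ∀ x : K, σ x = -x := by
          intro x
          have hx : x ∈ {x : K | ∃ t : K, x = t - σ t * 1} := by rw [h]; trivial
          obtain ⟨t, rfl⟩ := hx
          rw [mul_one, sub_eq_add_neg, hadd, hneg, hinv]
          abel
        have h2 : (1 : K) = -1 := by rw [← key 1, h1]
        have h20 : (2 : K) = 0 := by
          rw [← one_add_one_eq_two]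
          nth_rewrite 1 [h2]
          rw [neg_add_cancel]
        -- then σ x = -x = x, so the set is {0}, contradicting = univ
        have : (1 : K) ∈ {x : K | ∃ t : K, x = t - σ t * 1} := by rw [h]; trivial
        obtain ⟨t, ht⟩ := this
        rw [mul_one, key t, sub_neg_eq_add, ← two_mul, h20, zero_mul] at ht
        exact one_ne_zero ht
      · rintro ⟨-, h2, h3⟩
        exfalso
        apply h3
        rw [← one_add_one_eq_two]
        nth_rewrite 1 [h2]
        rw [neg_add_cancel]
  · -- ε = -1
    constructor
    · constructor
      · intro h
        have key : ∀ t : K, σ t = -t := by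
          intro t
          have ht : (t - σ t * (-1)) ∈ ({(0 : K)} : Set K) := h ▸ ⟨t, rfl⟩
          simp only [Set.mem_singleton_iff, mul_neg_one, sub_neg_eq_add] at ht
          exact neg_eq_of_add_eq_zero_right ht |>.symm
        have h2 : (1 : K) = -1 := by rw [← key 1, h1]
        have h20 : (2 : K) = 0 := by
          rw [← one_add_one_eq_two]
          nth_rewrite 1 [h2]
          rw [neg_add_cancel]
        refine ⟨funext fun t => ?_, h2.symm⟩
        have : -t = t := by
          have : t + t = 0 := by rw [← two_mul, h20, zero_mul]
          exact neg_eq_of_add_eq_zero_right this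
        simp [key t, this]
      · rintro ⟨rfl, h2⟩
        have h20 : (2 : K) = 0 := by
          rw [← one_add_one_eq_two]
          nth_rewrite 2 [← h2]
          rw [add_neg_cancel]
        ext x
        simp only [Set.mem_setOf_eq, Set.mem_singleton_iff, id_eq, mul_neg_one,
          sub_neg_eq_add]
        constructor
        · rintro ⟨t, rfl⟩
          rw [← two_mul, h20, zero_mul]
        · rintro rfl
          exact ⟨0, by simp⟩
    · constructor
      · intro h
        have key : ∀ x : K, σ x = x := by
          intro x
          have hx : x ∈ {x : K | ∃ t : K, x = t - σ t * (-1)} := by rw [h]; trivial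
          obtain ⟨t, rfl⟩ := hx
          rw [mul_neg_one, sub_neg_eq_add, hadd, hinv, add_comm]
        refine ⟨funext key, rfl, fun h20 => ?_⟩
        have : (1 : K) ∈ {x : K | ∃ t : K, x = t - σ t * (-1)} := by rw [h]; trivial
        obtain ⟨t, ht⟩ := this
        rw [mul_neg_one, sub_neg_eq_add, key t, ← two_mul, h20, zero_mul] at ht
        exact one_ne_zero ht
      · rintro ⟨rfl, -, h2⟩
        ext x
        simp only [Set.mem_setOf_eq, Set.mem_univ, iff_true, id_eq, mul_neg_one,
          sub_neg_eq_add]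
        refine ⟨2⁻¹ * x, ?_⟩
        rw [← two_mul, ← mul_assoc, mul_inv_cancel₀ h2, one_mul]
end

section
/- Let K be a division ring, σ an involutory anti-automorphism of K, and let K̄ := K/K_{σ,1} with the induced operation t̄ ∘ λ := (λ^σ t λ) + K_{σ,1}. Then an element t̄ = t + K_{σ,1} of K̄ satisfies the right-distributive law t̄ ∘ (λ + μ) = t̄ ∘ λ + t̄ ∘ μ for all λ, μ ∈ K if and only if t ∈ K^{σ,1}. -/
/-- In `K̄ = K/K_{σ,1}` with the induced operation
`t̄ ∘ λ = λ^σ t λ + K_{σ,1}`, the coset `t̄` satisfies the right-distributive law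
`t̄ ∘ (λ + μ) = t̄ ∘ λ + t̄ ∘ μ` for all `λ, μ` iff `t ∈ K^{σ,1}`, i.e. `t + t^σ = 0`.
(The condition is stated as membership of the relevant difference in `K_{σ,1}`.) -/
theorem stmt4 (K : Type*) [DivisionRing K] (σ : K → K)
    (hadd : ∀ x y : K, σ (x + y) = σ x + σ y)
    (hmul : ∀ x y : K, σ (x * y) = σ y * σ x)
    (hinv : ∀ x : K, σ (σ x) = x) :
    ∀ t : K,
      (∀ l m : K, ∃ s : K,
        σ (l + m) * t * (l + m) - (σ l * t * l + σ m * t * m) = s - σ s)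
      ↔ t + σ t = 0 := by
  have h0 : σ 0 = 0 := by
    have := hadd 0 0
    simpa using this.symm
  have hneg : ∀ x : K, σ (-x) = - σ x := by
    intro x
    have h := hadd x (-x)
    simp only [add_neg_cancel, h0] at h
    have h' : σ (-x) + σ x = 0 := by rw [add_comm]; exact h.symm
    exact eq_neg_of_add_eq_zero_left h'
  have h1 : σ 1 = 1 := by
    have h := hmul 1 1
    simp only [mul_one] at h
    have hne : σ 1 ≠ 0 := by
      intro hc
      have : σ (σ (1 : K)) = 0 := by rw [hc, h0]
      rw [hinv] at this
      exact one_ne_zero this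
    have := mul_right_cancel₀ hne (by rw [← h, one_mul] : σ (1 : K) * σ 1 = 1 * σ 1)
    exact this
  have hsub : ∀ x y : K, σ (x - y) = σ x - σ y := by
    intro x y
    rw [sub_eq_add_neg, hadd, hneg, sub_eq_add_neg]
  intro t
  have hσu : σ (t + σ t) = t + σ t := by rw [hadd, hinv, add_comm]
  constructor
  · intro H
    -- key: σ m * (t + σ t) * l lies in K_{σ,1} for all l, m
    have claim : ∀ l m : K, ∃ s : K, σ m * (t + σ t) * l = s - σ s := by
      intro l m
      obtain ⟨s, hs⟩ := H l m
      refine ⟨s - σ l * t * m, ?_⟩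
      have hσs : σ (σ l * t * m) = σ m * (σ t * l) := by
        rw [hmul, hmul, hinv]
      rw [hsub, hσs]
      rw [hadd] at hs
      have expand : (σ l + σ m) * t * (l + m) - (σ l * t * l + σ m * t * m)
          = σ l * t * m + σ m * t * l := by noncomm_ring
      rw [expand] at hs
      calc σ m * (t + σ t) * l
          = (σ l * t * m + σ m * t * l) - (σ l * t * m - σ m * (σ t * l)) := by
            noncomm_ring
        _ = (s - σ s) - (σ l * t * m - σ m * (σ t * l)) := by rw [hs]
        _ = (s - σ l * t * m) - (σ s - σ m * (σ t * l)) := by noncomm_ring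
    by_contra hne
    -- hne : ¬ (t + σ t = 0)
    set u := t + σ t with hu
    have hune : u ≠ 0 := hne
    obtain ⟨s, hs⟩ := claim u⁻¹ 1
    rw [h1, one_mul, mul_inv_cancel₀ hune] at hs
    -- hs : 1 = s - σ s
    have hσ1 : σ ((1:K)) = σ (s - σ s) := by rw [hs]
    rw [h1, hsub, hinv] at hσ1
    -- hσ1 : 1 = σ s - s
    have h2 : (1 : K) + 1 = 0 := by
      nth_rewrite 1 [hs]
      rw [hσ1]; abel
    have hdouble : ∀ x : K, x + x = 0 := by
      intro x
      have : (1 + 1 : K) * x = 0 := by rw [h2, zero_mul]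
      rwa [add_mul, one_mul] at this
    have hnegid : ∀ x : K, -x = x := fun x => neg_eq_of_add_eq_zero_left (hdouble x)
    -- every element of K_{σ,1} is σ-fixed, so σ m * u * l is σ-fixed
    have hfix : ∀ l m : K, σ l * u * m = σ m * u * l := by
      intro l m
      obtain ⟨s', hs'⟩ := claim l m
      have := congrArg σ hs'
      rw [hsub, hinv, hmul, hmul, hinv, hσu] at this
      calc σ l * u * m = σ s' - s' := by rw [mul_assoc, this]
        _ = -(s' - σ s') := by abel
        _ = s' - σ s' := hnegid _
        _ = σ m * u * l := hs'.symm
    have hcomm1 : ∀ l : K, σ l * u = u * l := by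
      intro l
      have := hfix l 1
      rwa [h1, one_mul, mul_one] at this
    have hcomm : ∀ a b : K, a * b = b * a := by
      intro a b
      have h3 : σ (a * b) * u = u * (a * b) := hcomm1 (a * b)
      rw [hmul] at h3
      have h4 : σ b * σ a * u = σ b * (u * a) := by rw [mul_assoc, hcomm1 a]
      rw [h4, ← mul_assoc, hcomm1 b, mul_assoc] at h3
      have := mul_left_cancel₀ hune h3
      rw [this]
    have hid : ∀ l : K, σ l = l := by
      intro l
      have := hcomm1 l
      rw [hcomm u l] at this
      exact mul_right_cancel₀ hune this
    rw [hid s, sub_self] at hs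
    exact one_ne_zero hs
  · intro ht l m
    have hσt : σ t = -t := eq_neg_of_add_eq_zero_right ht
    refine ⟨σ l * t * m, ?_⟩
    rw [hadd, hmul, hmul, hinv, hσt]
    noncomm_ring
end

section
/- Let V be a right vector space over a division ring K, σ an involutory anti-automorphism of K, and q : V → K/K_{σ,1} a σ-quadratic form whose sesquilinearization f_q is not the zero form. Then f_q is the unique (σ,1)-sesquilinear form f satisfying q(x + y) = q(x) + q(y) + (f(x,y) + K_{σ,1}) for all x, y ∈ V. -/
open MulOpposite

/-- The additive subgroup `K_{σ,1} = {t - t^σ : t ∈ K}` of a division ring `K`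
(for `σ` an involutory anti-automorphism, this set is itself a subgroup,
so it coincides with the closure used here). -/
def Ksigma1 (K : Type*) [DivisionRing K] (σ : K → K) : AddSubgroup K :=
  AddSubgroup.closure {x : K | ∃ t : K, x = t - σ t}

/-- `f : V × V → K` is a reflexive `(σ,1)`-sesquilinear form on the right
`K`-vector space `V`: biadditive, right `K`-linear in the second argument,
`σ`-semilinear in the first, with `f(y,x) = f(x,y)^σ`. -/
def IsSesq (K V : Type*) [DivisionRing K] [AddCommGroup V] [Module Kᵐᵒᵖ V]
    (σ : K → K) (f : V → V → K) : Prop :=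
  (∀ x y z : V, f (x + y) z = f x z + f y z) ∧
  (∀ x y z : V, f x (y + z) = f x y + f x z) ∧
  (∀ (x y : V) (l : K), f x (op l • y) = f x y * l) ∧
  (∀ (x y : V) (l : K), f (op l • x) y = σ l * f x y) ∧
  (∀ x y : V, f y x = σ (f x y))

/-- If `q : V → K/K_{σ,1}` is a `σ`-quadratic form whose
sesquilinearization `f` is not the zero form, then `f` is the unique
`(σ,1)`-sesquilinear form satisfying `q(x+y) = q(x) + q(y) + (f(x,y) + K_{σ,1})`. -/
theorem stmt6 (K V : Type*) [DivisionRing K] [AddCommGroup V] [Module Kᵐᵒᵖ V]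
    (σ : K → K)
    (hadd : ∀ x y : K, σ (x + y) = σ x + σ y)
    (hmul : ∀ x y : K, σ (x * y) = σ y * σ x)
    (hinv : ∀ x : K, σ (σ x) = x)
    (q : V → K ⧸ Ksigma1 K σ) (f f' : V → V → K)
    (hf : IsSesq K V σ f) (hf' : IsSesq K V σ f')
    (hq1 : ∀ (x : V) (l t : K), q x = QuotientAddGroup.mk t →
      q (op l • x) = QuotientAddGroup.mk (σ l * t * l))
    (hq2 : ∀ x y : V, q (x + y) = q x + q y + QuotientAddGroup.mk (f x y))
    (hq2' : ∀ x y : V, q (x + y) = q x + q y + QuotientAddGroup.mk (f' x y))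
    (hf0 : f ≠ fun _ _ => 0) :
    f = f' := by
  obtain ⟨f1, f2, f3, f4, f5⟩ := hf
  obtain ⟨f1', f2', f3', f4', f5'⟩ := hf'
  have hσ0 : σ 0 = 0 := by
    have h := hadd 0 0
    rw [add_zero] at h
    exact (right_eq_add.mp h)
  have hσneg : ∀ a : K, σ (-a) = - σ a := by
    intro a
    have h := hadd a (-a)
    rw [add_neg_cancel, hσ0] at h
    exact eq_neg_of_add_eq_zero_right h.symm
  have hmem : ∀ a ∈ Ksigma1 K σ, σ a = -a := by
    intro a ha
    refine AddSubgroup.closure_induction ?_ ?_ ?_ ?_ ha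
    · rintro x ⟨t, rfl⟩
      have h : σ (t - σ t) = σ t - t := by
        rw [sub_eq_add_neg, hadd, hσneg, hinv, ← sub_eq_add_neg]
      rw [h, neg_sub]
    · rw [hσ0, neg_zero]
    · intro x y _ _ hx hy
      rw [hadd, hx, hy, neg_add]
    · intro x _ hx
      rw [hσneg, hx, neg_neg]
  have hdiff : ∀ u v : V, f u v - f' u v ∈ Ksigma1 K σ := by
    intro u v
    have h := (hq2 u v).symm.trans (hq2' u v)
    have h2 : (QuotientAddGroup.mk (f u v) : K ⧸ Ksigma1 K σ) = QuotientAddGroup.mk (f' u v) :=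
      add_left_cancel h
    have h3 := (QuotientAddGroup.eq (s := Ksigma1 K σ)).mp h2
    have := (Ksigma1 K σ).neg_mem h3
    simpa [neg_add_rev, sub_eq_add_neg, add_comm] using this
  funext x y
  by_contra hc
  set c := f x y - f' x y with hcdef
  have hc0 : c ≠ 0 := sub_ne_zero.mpr hc
  have hall : ∀ l : K, σ (c * l) = -(c * l) := by
    intro l
    have h := hdiff x (op l • y)
    rw [f3, f3', ← sub_mul, ← hcdef] at h
    exact hmem _ h
  have hσall : ∀ a : K, σ a = -a := by
    intro a
    have : c * (c⁻¹ * a) = a := by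
      rw [← mul_assoc, mul_inv_cancel₀ hc0, one_mul]
    have h := hall (c⁻¹ * a)
    rwa [this] at h
  have hσ1 : σ 1 = 1 := by
    have h := hmul 1 1
    rw [one_mul] at h
    have hne : σ 1 ≠ 0 := by
      intro h0
      have := hinv 1
      rw [h0, hσ0] at this
      exact zero_ne_one this
    have : σ 1 * 1 = σ 1 * σ 1 := by rw [mul_one, ← h]
    exact (mul_left_cancel₀ hne this).symm
  have h1neg : (1 : K) = -1 := by rw [← hσall 1, hσ1]
  have hnegid : ∀ a : K, -a = a := by
    intro a
    calc -a = (-1) * a := by rw [neg_one_mul]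
    _ = 1 * a := by rw [← h1neg]
    _ = a := one_mul a
  have hbot : Ksigma1 K σ ≤ ⊥ := by
    apply AddSubgroup.closure_le (K := (⊥ : AddSubgroup K)) |>.mpr
    rintro x ⟨t, rfl⟩
    have : σ t = t := by rw [hσall, hnegid]
    simp [this]
  have := hbot (hdiff x y)
  rw [AddSubgroup.mem_bot] at this
  exact hc0 (hcdef ▸ this)
end

section
/- Let V be a 2n-dimensional vector space over a field K (n ≥ 2) with a nondegenerate alternating bilinear form f, and let a, b, c be nonzero vectors of V. Then the subspace a^⊥ ∩ b^⊥ ∩ c^⊥ contains a totally isotropic subspace of dimension n − 1. In particular, for any three points of the symplectic polar space W(2n−1, K), their common perp contains a sub-generator. -/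
open Module Submodule

/-- In a `2n`-dimensional symplectic space `(V, f)` with `n ≥ 2`,
for any nonzero vectors `a, b, c` the subspace `a^⊥ ∩ b^⊥ ∩ c^⊥` contains a totally
isotropic subspace of dimension `n - 1` (a sub-generator of `W(2n-1, K)`). -/
theorem stmt11 (K V : Type*) [Field K] [AddCommGroup V] [Module K V]
    [FiniteDimensional K V] (n : ℕ) (hn : 2 ≤ n)
    (hdim : Module.finrank K V = 2 * n)
    (f : V →ₗ[K] V →ₗ[K] K)
    (halt : ∀ v : V, f v v = 0)
    (hnd : ∀ v : V, (∀ w : V, f v w = 0) → v = 0)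
    (a b c : V) (ha : a ≠ 0) (hb : b ≠ 0) (hc : c ≠ 0) :
    ∃ U : Submodule K V, Module.finrank K U = n - 1 ∧
      (∀ u ∈ U, ∀ u' ∈ U, f u u' = 0) ∧
      (∀ u ∈ U, f u a = 0 ∧ f u b = 0 ∧ f u c = 0) := by
  classical
  set B : LinearMap.BilinForm K V := f with hB
  have hAlt : B.IsAlt := halt
  have hRefl : B.IsRefl := hAlt.isRefl
  have hNd : B.Nondegenerate := ⟨hnd, fun y hy => hnd y fun w => hRefl w y (hy w)⟩
  set S : Submodule K V := Submodule.span K {a, b, c} with hS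
  have hSfin : finrank K S ≤ 3 := by
    have h1 : finrank K S ≤ ({a, b, c} : Set V).toFinset.card :=
      finrank_span_le_card ({a, b, c} : Set V)
    have h2 : ({a, b, c} : Set V).toFinset.card ≤ 3 := by
      have hsub : ({a, b, c} : Set V).toFinset ⊆ {a, b, c} := by
        intro x hx
        simpa using hx
      calc ({a, b, c} : Set V).toFinset.card ≤ ({a, b, c} : Finset V).card :=
            Finset.card_le_card hsub
        _ ≤ ({b, c} : Finset V).card + 1 := Finset.card_insert_le _ _
        _ ≤ (({c} : Finset V).card + 1) + 1 := by
            have := Finset.card_insert_le b ({c} : Finset V)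
            omega
        _ ≤ 3 := by simp
    omega
  -- key induction: for every k ≤ n - 1 there is a totally isotropic subspace of
  -- dimension k inside the orthogonal complement of S
  have key : ∀ k : ℕ, k ≤ n - 1 → ∃ U : Submodule K V, finrank K U = k ∧
      U ≤ B.orthogonal S ∧ (∀ u ∈ U, ∀ u' ∈ U, f u u' = 0) := by
    intro k
    induction k with
    | zero =>
      intro _
      exact ⟨⊥, finrank_bot K V, bot_le, by simp⟩
    | succ k ih =>
      intro hk1
      obtain ⟨U, hUrank, hUle, hUiso⟩ := ih (Nat.le_of_succ_le hk1)
      have hNrank : finrank K (S ⊔ U : Submodule K V) ≤ 3 + k := by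
        have h := Submodule.finrank_sup_add_finrank_inf_eq S U
        have hU : finrank K U = k := hUrank
        omega
      have hPrank : finrank K (B.orthogonal (S ⊔ U)) = finrank K V - finrank K (S ⊔ U : Submodule K V) :=
        LinearMap.BilinForm.finrank_orthogonal hNd (S ⊔ U)
      have hbig : finrank K U < finrank K (B.orthogonal (S ⊔ U)) := by
        have hNle : finrank K (S ⊔ U : Submodule K V) ≤ finrank K V := Submodule.finrank_le _
        rw [hPrank, hUrank, hdim]
        omega
      have hnle : ¬ B.orthogonal (S ⊔ U) ≤ U := fun h =>
        absurd (Submodule.finrank_mono h) (not_le_of_gt hbig)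
      obtain ⟨x, hxP, hxU⟩ := Set.not_subset.1 hnle
      have hx0 : x ≠ 0 := fun h => hxU (h ▸ U.zero_mem)
      -- orthogonality facts about x
      have hxS : ∀ s ∈ S, f s x = 0 := fun s hs => hxP s (le_sup_left (b := U) hs)
      have hxU' : ∀ u ∈ U, f u x = 0 := fun u hu => hxP u (le_sup_right (a := S) hu)
      refine ⟨U ⊔ Submodule.span K {x}, ?_, ?_, ?_⟩
      · -- dimension
        have hinf : U ⊓ Submodule.span K {x} = ⊥ := by
          rw [eq_bot_iff]
          rintro y ⟨hyU, hyx⟩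
          obtain ⟨t, rfl⟩ := Submodule.mem_span_singleton.1 hyx
          rcases eq_or_ne t 0 with rfl | ht
          · simp
          · exact absurd (by simpa [ht] using U.smul_mem t⁻¹ hyU) hxU
        have := Submodule.finrank_sup_add_finrank_inf_eq U (Submodule.span K {x})
        rw [hinf, finrank_bot, finrank_span_singleton hx0] at this
        omega
      · -- contained in orthogonal of S
        refine sup_le hUle ?_
        rw [Submodule.span_le, Set.singleton_subset_iff]
        intro s hs
        exact hxP s (le_sup_left (b := U) hs)
      · -- totally isotropic
        intro u hu u' hu'
        obtain ⟨p, hp, q, hq, rfl⟩ := Submodule.mem_sup.1 hu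
        obtain ⟨p', hp', q', hq', rfl⟩ := Submodule.mem_sup.1 hu'
        obtain ⟨s, rfl⟩ := Submodule.mem_span_singleton.1 hq
        obtain ⟨t, rfl⟩ := Submodule.mem_span_singleton.1 hq'
        have h1 : f p p' = 0 := hUiso p hp p' hp'
        have h2 : f p x = 0 := hxU' p hp
        have h3 : f x p' = 0 := hRefl p' x (hxU' p' hp')
        have h4 : f x x = 0 := halt x
        simp [map_add, LinearMap.add_apply, map_smul, LinearMap.smul_apply, h1, h2, h3, h4]
  obtain ⟨U, hUrank, hUle, hUiso⟩ := key (n - 1) le_rfl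
  refine ⟨U, hUrank, hUiso, fun u hu => ?_⟩
  have haS : a ∈ S := Submodule.subset_span (by simp)
  have hbS : b ∈ S := Submodule.subset_span (by simp)
  have hcS : c ∈ S := Submodule.subset_span (by simp)
  exact ⟨hRefl a u (hUle hu a haS), hRefl b u (hUle hu b hbS), hRefl c u (hUle hu c hcS)⟩
end

section
/- Let Q be a generalized quadrangle (a rank-2 polar space: any point not on a line ℓ is collinear with exactly one point of ℓ, lines have at least 3 points, points lie on at least 3 lines) satisfying property (D): for every point x and every hyperbolic line h = {a,b}^{⊥⊥} (a,b non-collinear), x^⊥ ∩ h ≠ ∅. Then for any two non-collinear points a, b and any two distinct points c, d ∈ {a,b}^⊥, the points c and d are non-collinear and {c,d}^⊥ = {a,b}^{⊥⊥}. -/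
/-- A thick non-degenerate generalized quadrangle (rank-2 polar space):
every point lies on a line, two distinct points lie on at most one common line,
every point off a line is collinear with exactly one point of the line,
every line has at least 3 points, every point lies on at least 3 lines,
and no point is collinear with all points. -/
structure GenQuadrangle where
  P : Type
  Lines : Set (Set P)
  point_on_line : ∀ p : P, ∃ ℓ ∈ Lines, p ∈ ℓ
  unique_joining : ∀ p q : P, p ≠ q → ∀ ℓ ∈ Lines, ∀ m ∈ Lines,
    p ∈ ℓ → q ∈ ℓ → p ∈ m → q ∈ m → ℓ = m
  gq_axiom : ∀ ℓ ∈ Lines, ∀ p : P, p ∉ ℓ →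
    ∃! q, q ∈ ℓ ∧ ∃ m ∈ Lines, p ∈ m ∧ q ∈ m
  thick_lines : ∀ ℓ ∈ Lines, ∃ a b c : P,
    a ∈ ℓ ∧ b ∈ ℓ ∧ c ∈ ℓ ∧ a ≠ b ∧ a ≠ c ∧ b ≠ c
  thick_points : ∀ p : P, ∃ ℓ m k, ℓ ∈ Lines ∧ m ∈ Lines ∧ k ∈ Lines ∧
    p ∈ ℓ ∧ p ∈ m ∧ p ∈ k ∧ ℓ ≠ m ∧ ℓ ≠ k ∧ m ≠ k
  nondegenerate : ∀ p : P, ∃ q : P, ¬ (p = q ∨ ∃ ℓ ∈ Lines, p ∈ ℓ ∧ q ∈ ℓ)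

namespace GenQuadrangle

variable (Q : GenQuadrangle)

/-- Collinearity (with `x ⊥ x` by convention). -/
def Collin (x y : Q.P) : Prop := x = y ∨ ∃ ℓ ∈ Q.Lines, x ∈ ℓ ∧ y ∈ ℓ

/-- `X^⊥`, the set of points collinear with every point of `X`. -/
def perp (X : Set Q.P) : Set Q.P := {y | ∀ x ∈ X, Q.Collin y x}

end GenQuadrangle

namespace GenQuadrangle

lemma collin_symm (Q : GenQuadrangle) {x y : Q.P} (h : Q.Collin x y) : Q.Collin y x := by
  rcases h with rfl | ⟨ℓ, hℓ, hx, hy⟩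
  · exact Or.inl rfl
  · exact Or.inr ⟨ℓ, hℓ, hy, hx⟩

/-- If `p ∉ m`, then any two points of `m` collinear with `p` (and distinct from `p`)
coincide. -/
lemma unique_on_line (Q : GenQuadrangle) {m : Set Q.P} (hm : m ∈ Q.Lines)
    {p z u : Q.P} (hp : p ∉ m) (hz : z ∈ m) (hu : u ∈ m)
    (hpz : Q.Collin p z) (hpu : Q.Collin p u)
    (hpz' : p ≠ z) (hpu' : p ≠ u) : z = u := by
  obtain ⟨q, _, huniq⟩ := Q.gq_axiom m hm p hp
  rcases hpz with h | ⟨ℓ, hℓ, h1, h2⟩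
  · exact absurd h hpz'
  rcases hpu with h | ⟨ℓ', hℓ', h1', h2'⟩
  · exact absurd h hpu'
  exact (huniq z ⟨hz, ℓ, hℓ, h1, h2⟩).trans (huniq u ⟨hu, ℓ', hℓ', h1', h2'⟩).symm

/-- Two distinct points of `{a,b}^⊥` (with `a,b` non-collinear) are non-collinear. -/
lemma noncol_of_perp (Q : GenQuadrangle) {a b c d : Q.P} (hab : ¬ Q.Collin a b)
    (hc : c ∈ Q.perp {a, b}) (hd : d ∈ Q.perp {a, b}) (hcd : c ≠ d) :
    ¬ Q.Collin c d := by
  have hca : Q.Collin c a := hc a (Set.mem_insert _ _)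
  have hcb : Q.Collin c b := hc b (Set.mem_insert_of_mem _ rfl)
  have hda : Q.Collin d a := hd a (Set.mem_insert _ _)
  have hdb : Q.Collin d b := hd b (Set.mem_insert_of_mem _ rfl)
  rintro (rfl | ⟨ℓ, hℓ, hcℓ, hdℓ⟩)
  · exact hcd rfl
  by_cases haℓ : a ∈ ℓ
  · by_cases hbℓ : b ∈ ℓ
    · exact hab (Or.inr ⟨ℓ, hℓ, haℓ, hbℓ⟩)
    · refine hcd (Q.unique_on_line hℓ hbℓ hcℓ hdℓ (Q.collin_symm hcb) (Q.collin_symm hdb)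
        ?_ ?_)
      · rintro rfl; exact hbℓ hcℓ
      · rintro rfl; exact hbℓ hdℓ
  · refine hcd (Q.unique_on_line hℓ haℓ hcℓ hdℓ (Q.collin_symm hca) (Q.collin_symm hda)
      ?_ ?_)
    · rintro rfl; exact haℓ hcℓ
    · rintro rfl; exact haℓ hdℓ

end GenQuadrangle

/-- If a thick non-degenerate generalized quadrangle satisfies
property (D) (every point perp meets every hyperbolic line), then for any
non-collinear `a, b` and distinct `c, d ∈ {a,b}^⊥`, the points `c, d` are
non-collinear and `{c,d}^⊥ = {a,b}^{⊥⊥}`. -/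
theorem stmt14 (Q : GenQuadrangle)
    (hD : ∀ (x a b : Q.P), ¬ Q.Collin a b →
      ∃ z, z ∈ Q.perp (Q.perp {a, b}) ∧ Q.Collin x z) :
    ∀ a b : Q.P, ¬ Q.Collin a b → ∀ c d : Q.P,
      c ∈ Q.perp {a, b} → d ∈ Q.perp {a, b} → c ≠ d →
      ¬ Q.Collin c d ∧ Q.perp {c, d} = Q.perp (Q.perp {a, b}) := by
  intro a b hab c d hc hd hcd
  have hncd : ¬ Q.Collin c d := Q.noncol_of_perp hab hc hd hcd
  refine ⟨hncd, ?_⟩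
  ext z
  constructor
  · intro hz
    -- z is collinear with c and d
    have hzc : Q.Collin z c := hz c (Set.mem_insert _ _)
    have hzd : Q.Collin z d := hz d (Set.mem_insert_of_mem _ rfl)
    -- property (D) gives u ∈ {a,b}^{⊥⊥} collinear with z
    obtain ⟨u, hu, hzu⟩ := hD z a b hab
    have huc : Q.Collin u c := hu c hc
    have hud : Q.Collin u d := hu d hd
    -- z ≠ c, z ≠ d, u ≠ c, u ≠ d (otherwise c ⊥ d)
    have hznec : z ≠ c := by rintro rfl; exact hncd hzd
    have hzned : z ≠ d := by rintro rfl; exact hncd (Q.collin_symm hzc)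
    have hunec : u ≠ c := by rintro rfl; exact hncd hud
    have huned : u ≠ d := by rintro rfl; exact hncd (Q.collin_symm huc)
    -- show z = u
    have hzequ : z = u := by
      rcases hzu with rfl | ⟨m, hm, hzm, hum⟩
      · rfl
      by_cases hcm : c ∈ m
      · -- then d ∉ m (else c ⊥ d); use uniqueness with p = d
        have hdm : d ∉ m := fun hdm => hncd (Or.inr ⟨m, hm, hcm, hdm⟩)
        exact Q.unique_on_line hm hdm hzm hum (Q.collin_symm hzd) (Q.collin_symm hud)
          (Ne.symm hzned) (Ne.symm huned)
      · exact Q.unique_on_line hm hcm hzm hum (Q.collin_symm hzc) (Q.collin_symm huc)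
          (Ne.symm hznec) (Ne.symm hunec)
    exact hzequ ▸ hu
  · intro hz x hx
    rcases hx with rfl | hx
    · exact hz x hc
    · rw [Set.mem_singleton_iff] at hx
      exact hx ▸ hz d hd
end

section
/- Let S be a non-degenerate polar space of finite rank n ≥ 2 and S' a subspace of S of rank n (i.e. containing a generator of S). If every sub-generator of S' is ideal — meaning every generator of S containing it lies in S' — then S' = S. -/
/-- A non-degenerate thick-lined polar space (of rank at least 2), in the
Buekenhout–Shult style: a point-line geometry in which every point lies on a
line, every line has at least 3 points, for every point `p` off a line `ℓ`
either exactly one or all points of `ℓ` are collinear with `p`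
(the "one-or-all" axiom), and no point is collinear with all points. -/
structure PolarSpace where
  P : Type
  Lines : Set (Set P)
  pt_nonempty : Nonempty P
  point_on_line : ∀ p : P, ∃ ℓ ∈ Lines, p ∈ ℓ
  thick_lines : ∀ ℓ ∈ Lines, ∃ a b c : P,
    a ∈ ℓ ∧ b ∈ ℓ ∧ c ∈ ℓ ∧ a ≠ b ∧ a ≠ c ∧ b ≠ c
  one_or_all : ∀ ℓ ∈ Lines, ∀ p : P, p ∉ ℓ →
    (∃! q, q ∈ ℓ ∧ (p = q ∨ ∃ m ∈ Lines, p ∈ m ∧ q ∈ m)) ∨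
    (∀ q ∈ ℓ, p = q ∨ ∃ m ∈ Lines, p ∈ m ∧ q ∈ m)
  nondegenerate : ∀ p : P, ∃ q : P, ¬ (p = q ∨ ∃ m ∈ Lines, p ∈ m ∧ q ∈ m)

namespace PolarSpace

variable (Γ : PolarSpace)

/-- Collinearity (with `x ⊥ x` by convention). -/
def Collin (x y : Γ.P) : Prop := x = y ∨ ∃ ℓ ∈ Γ.Lines, x ∈ ℓ ∧ y ∈ ℓ

/-- `X^⊥`, the set of points collinear with every point of `X`. -/
def perp (X : Set Γ.P) : Set Γ.P := {y | ∀ x ∈ X, Γ.Collin y x}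

/-- A subspace: a set of points meeting every line not contained in it in at
most one point. -/
def IsSubspace (X : Set Γ.P) : Prop :=
  ∀ ℓ ∈ Γ.Lines, ∀ x ∈ ℓ ∩ X, ∀ y ∈ ℓ ∩ X, x ≠ y → ℓ ⊆ X

/-- A singular subspace: a subspace whose points are pairwise collinear. -/
def IsSingular (X : Set Γ.P) : Prop :=
  Γ.IsSubspace X ∧ ∀ x ∈ X, ∀ y ∈ X, Γ.Collin x y

/-- A generator: a maximal singular subspace. -/
def IsGenerator (M : Set Γ.P) : Prop :=
  Γ.IsSingular M ∧ ∀ X : Set Γ.P, Γ.IsSingular X → M ⊆ X → X = M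

/-- A geometric hyperplane `N` of a singular subspace `M`: a proper subspace of
`M` meeting every line contained in `M`. -/
def IsHypOf (N M : Set Γ.P) : Prop :=
  N ⊆ M ∧ N ≠ M ∧ Γ.IsSubspace N ∧ ∀ ℓ ∈ Γ.Lines, ℓ ⊆ M → (ℓ ∩ N).Nonempty

/-- A sub-generator: a geometric hyperplane of some generator
(a singular subspace of rank `n - 1`). -/
def IsSubGen (N : Set Γ.P) : Prop := ∃ M, Γ.IsGenerator M ∧ Γ.IsHypOf N M

/-- A hyperplane of the polar space: a proper subspace meeting every line. -/
def IsHyperplane (H : Set Γ.P) : Prop :=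
  Γ.IsSubspace H ∧ H ≠ Set.univ ∧ ∀ ℓ ∈ Γ.Lines, (ℓ ∩ H).Nonempty

/-- `N` is a generator of the (sub-)polar space on the point set `T`: a maximal
singular subspace among those contained in `T`. -/
def GeneratorOf (N T : Set Γ.P) : Prop :=
  N ⊆ T ∧ Γ.IsSingular N ∧ ∀ X : Set Γ.P, Γ.IsSingular X → X ⊆ T → N ⊆ X → X = N

end PolarSpace

/-- Let `S` be a non-degenerate polar space of finite rank
(every singular subspace lies in a generator, and the dual collinearity graph on
generators — two generators adjacent when they meet in a sub-generator — is
connected). Let `S'` be a subspace of `S` of rank `n`, i.e. containing a generator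
of `S`. If every sub-generator of `S` contained in `S'` is ideal (every generator
of `S` containing it lies in `S'`), then `S' = S`. -/
theorem stmt17 (Γ : PolarSpace)
    (hfinrank : ∀ X : Set Γ.P, Γ.IsSingular X → ∃ M, Γ.IsGenerator M ∧ X ⊆ M)
    (hdualconn : ∀ M M' : Set Γ.P, Γ.IsGenerator M → Γ.IsGenerator M' →
      Relation.ReflTransGen
        (fun X Y : Set Γ.P => Γ.IsGenerator X ∧ Γ.IsGenerator Y ∧
          Γ.IsHypOf (X ∩ Y) X ∧ Γ.IsHypOf (X ∩ Y) Y) M M')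
    (S' : Set Γ.P) (hsub : Γ.IsSubspace S')
    (hgen : ∃ M, Γ.IsGenerator M ∧ M ⊆ S')
    (hideal : ∀ N : Set Γ.P, Γ.IsSubGen N → N ⊆ S' →
      ∀ M : Set Γ.P, Γ.IsGenerator M → N ⊆ M → M ⊆ S') :
    S' = Set.univ := by
  obtain ⟨M0, hM0, hM0S⟩ := hgen
  have key : ∀ M' : Set Γ.P,
      Relation.ReflTransGen
        (fun X Y : Set Γ.P => Γ.IsGenerator X ∧ Γ.IsGenerator Y ∧
          Γ.IsHypOf (X ∩ Y) X ∧ Γ.IsHypOf (X ∩ Y) Y) M0 M' → M' ⊆ S' := by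
    intro M' h
    induction h with
    | refl => exact hM0S
    | tail _ hbc ih =>
      obtain ⟨hb, hc, hhb, hhc⟩ := hbc
      exact hideal _ ⟨_, hb, hhb⟩ (Set.inter_subset_left.trans ih) _ hc
        Set.inter_subset_right
  apply Set.eq_univ_of_forall
  intro p
  have hsing : Γ.IsSingular {p} := by
    constructor
    · intro ℓ _ x hx y hy hxy
      exact absurd (hx.2.trans hy.2.symm) hxy
    · rintro x rfl y rfl
      exact Or.inl rfl
  obtain ⟨M, hM, hpM⟩ := hfinrank _ hsing
  exact key M (hdualconn M0 M hM0 hM) (hpM rfl)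
end

section
/- Let S be a non-degenerate thick-lined polar space of rank n ≥ 2 in which every triad is centric, i.e. for any three points a, b, c the set {a,b,c}^⊥ contains a sub-generator of S (a point if n = 2). Then S satisfies property (B): every hyperplane H of S containing {a,b}^⊥ for two non-collinear points a, b contains a generator of S. -/
namespace PolarSpace

variable (Γ : PolarSpace)

theorem collin_refl (x : Γ.P) : Γ.Collin x x := Or.inl rfl

theorem collin_symm {x y : Γ.P} (h : Γ.Collin x y) : Γ.Collin y x := by
  rcases h with h | ⟨ℓ, hℓ, hx, hy⟩
  · exact Or.inl h.symm
  · exact Or.inr ⟨ℓ, hℓ, hy, hx⟩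

theorem collin_line {x y : Γ.P} {ℓ : Set Γ.P} (hℓ : ℓ ∈ Γ.Lines) (hx : x ∈ ℓ)
    (hy : y ∈ ℓ) : Γ.Collin x y := Or.inr ⟨ℓ, hℓ, hx, hy⟩

/-- If a point is collinear with two distinct points of a line, it is collinear
with every point of that line. -/
theorem one_two_all {ℓ : Set Γ.P} (hℓ : ℓ ∈ Γ.Lines) {x y p : Γ.P}
    (hx : x ∈ ℓ) (hy : y ∈ ℓ) (hxy : x ≠ y)
    (hpx : Γ.Collin p x) (hpy : Γ.Collin p y) : ∀ w ∈ ℓ, Γ.Collin p w := by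
  intro w hw
  by_cases hp : p ∈ ℓ
  · exact Γ.collin_line hℓ hp hw
  · rcases Γ.one_or_all ℓ hℓ p hp with ⟨q, _, huniq⟩ | hall
    · have h1 : x = q := huniq x ⟨hx, hpx⟩
      have h2 : y = q := huniq y ⟨hy, hpy⟩
      exact absurd (h1.trans h2.symm) hxy
    · exact hall w hw

/-- The perp of a single point, as a set. -/
def Pperp (p : Γ.P) : Set Γ.P := {q | Γ.Collin q p}

theorem pperp_subspace (p : Γ.P) : Γ.IsSubspace (Γ.Pperp p) := by
  intro ℓ hℓ x hx y hy hxy w hw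
  exact Γ.collin_symm
    (Γ.one_two_all hℓ hx.1 hy.1 hxy (Γ.collin_symm hx.2) (Γ.collin_symm hy.2) w hw)

/-- The span of a set of points: the intersection of all subspaces containing it. -/
def Span (A : Set Γ.P) : Set Γ.P :=
  {z | ∀ S : Set Γ.P, Γ.IsSubspace S → A ⊆ S → z ∈ S}

theorem subset_span {A : Set Γ.P} : A ⊆ Γ.Span A :=
  fun _ ha S _ hAS => hAS ha

theorem span_min {A S : Set Γ.P} (hS : Γ.IsSubspace S) (hAS : A ⊆ S) :
    Γ.Span A ⊆ S := fun _ hz => hz S hS hAS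

theorem span_subspace (A : Set Γ.P) : Γ.IsSubspace (Γ.Span A) := by
  intro ℓ hℓ x hx y hy hxy w hw S hS hAS
  exact hS ℓ hℓ x ⟨hx.1, hx.2 S hS hAS⟩ y ⟨hy.1, hy.2 S hS hAS⟩ hxy hw

/-- Points of the span of a pairwise-collinear set are collinear with the set. -/
theorem span_perp {A : Set Γ.P} (hA : ∀ x ∈ A, ∀ y ∈ A, Γ.Collin x y) :
    ∀ z ∈ Γ.Span A, ∀ x ∈ A, Γ.Collin z x := by
  intro z hz x hx
  exact Γ.span_min (Γ.pperp_subspace x) (fun a ha => hA a ha x hx) hz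

/-- The span of a pairwise-collinear set is a singular subspace. -/
theorem span_singular {A : Set Γ.P} (hA : ∀ x ∈ A, ∀ y ∈ A, Γ.Collin x y) :
    Γ.IsSingular (Γ.Span A) := by
  refine ⟨Γ.span_subspace A, ?_⟩
  intro x hx y hy
  have hxA : ∀ a ∈ A, Γ.Collin a x :=
    fun a ha => Γ.collin_symm (Γ.span_perp hA x hx a ha)
  exact Γ.collin_symm (Γ.span_min (Γ.pperp_subspace x) hxA hy)

/-- A singular subspace is spanned by a geometric hyperplane of it together
with any point outside that hyperplane. -/
theorem hyp_span {M N : Set Γ.P} (hM : Γ.IsSingular M) (hN : Γ.IsHypOf N M)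
    {c : Γ.P} (hcM : c ∈ M) (hcN : c ∉ N) : M ⊆ Γ.Span (N ∪ {c}) := by
  intro w hw
  by_cases hwc : w = c
  · exact hwc ▸ Γ.subset_span (Or.inr rfl)
  by_cases hwN : w ∈ N
  · exact Γ.subset_span (Or.inl hwN)
  rcases hM.2 w hw c hcM with heq | ⟨t, ht, hwt, hct⟩
  · exact absurd heq hwc
  have htM : t ⊆ M := hM.1 t ht w ⟨hwt, hw⟩ c ⟨hct, hcM⟩ hwc
  obtain ⟨x, hxt, hxN⟩ := hN.2.2.2 t ht htM
  have hxc : x ≠ c := fun h => hcN (h ▸ hxN)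
  exact (Γ.span_subspace (N ∪ {c})) t ht x ⟨hxt, Γ.subset_span (Or.inl hxN)⟩
    c ⟨hct, Γ.subset_span (Or.inr rfl)⟩ hxc hwt

/-- A point collinear with all points of a generator belongs to the generator. -/
theorem gen_absorb {M : Set Γ.P} {z : Γ.P} (hM : Γ.IsGenerator M)
    (hz : ∀ m ∈ M, Γ.Collin z m) : z ∈ M := by
  have hpair : ∀ x ∈ M ∪ {z}, ∀ y ∈ M ∪ {z}, Γ.Collin x y := by
    rintro x (hx | rfl) y (hy | rfl)
    · exact hM.1.2 x hx y hy
    · exact Γ.collin_symm (hz x hx)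
    · exact hz y hy
    · exact Γ.collin_refl _
  have heq := hM.2 _ (Γ.span_singular hpair)
    ((Set.subset_union_left).trans Γ.subset_span)
  exact heq ▸ Γ.subset_span (Or.inr rfl)

/-- Key lemma: the span of a sub-generator `N` together with a point `c ∉ N`
collinear with all of `N` is a generator. -/
theorem span_gen {N : Set Γ.P} {c : Γ.P} (hN : Γ.IsSubGen N)
    (hc : ∀ n ∈ N, Γ.Collin c n) (hcN : c ∉ N) :
    Γ.IsGenerator (Γ.Span (N ∪ {c})) := by
  obtain ⟨M₀, hM₀, hhyp⟩ := hN
  have hNM₀ : N ⊆ M₀ := hhyp.1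
  have hpair : ∀ x ∈ N ∪ {c}, ∀ y ∈ N ∪ {c}, Γ.Collin x y := by
    rintro x (hx | rfl) y (hy | rfl)
    · exact hM₀.1.2 x (hNM₀ hx) y (hNM₀ hy)
    · exact Γ.collin_symm (hc x hx)
    · exact hc y hy
    · exact Γ.collin_refl _
  have hsing := Γ.span_singular hpair
  by_cases hcM : c ∈ M₀
  · have h1 : Γ.Span (N ∪ {c}) = M₀ := by
      refine subset_antisymm (Γ.span_min hM₀.1.1 ?_) (Γ.hyp_span hM₀.1 hhyp hcM hcN)
      rintro x (hx | rfl)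
      · exact hNM₀ hx
      · exact hcM
    rw [h1]; exact hM₀
  · have hd : ∃ d ∈ M₀, ¬ Γ.Collin c d := by
      by_contra h; push_neg at h
      exact hcM (Γ.gen_absorb hM₀ h)
    obtain ⟨d, hdM, hcd⟩ := hd
    refine ⟨hsing, ?_⟩
    intro X hX hsubX
    refine subset_antisymm ?_ hsubX
    intro z hz
    have hcSpan : c ∈ Γ.Span (N ∪ {c}) := Γ.subset_span (Or.inr rfl)
    by_cases hzceq : z = c
    · exact hzceq ▸ hcSpan
    have hzc : Γ.Collin z c := hX.2 z hz c (hsubX hcSpan)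
    rcases hzc with h | ⟨t, ht, hzt, hct⟩
    · exact absurd h hzceq
    have hdt : d ∉ t := fun hdt => hcd (Γ.collin_symm (Γ.collin_line ht hdt hct))
    rcases Γ.one_or_all t ht d hdt with ⟨e, ⟨het, hde⟩, _⟩ | hall
    · have hde' : Γ.Collin d e := hde
      have hNe : ∀ n ∈ N, Γ.Collin n e := by
        intro n hn
        have h1 : Γ.Collin n c := Γ.collin_symm (hc n hn)
        have h2 : Γ.Collin n z := hX.2 n (hsubX (Γ.subset_span (Or.inl hn))) z hz
        exact Γ.one_two_all ht hct hzt (Ne.symm hzceq) h1 h2 e het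
      have hce : Γ.Collin c e := Γ.collin_line ht hct het
      have hece : e ≠ c := fun h => hcd (Γ.collin_symm (h ▸ hde'))
      have heN : e ∈ N := by
        by_contra heN
        have hMe : ∀ m ∈ M₀, Γ.Collin m e := by
          have hsub1 : M₀ ⊆ Γ.Span (N ∪ {d}) :=
            Γ.hyp_span hM₀.1 hhyp hdM (fun hdN => hcd (hc d hdN))
          have hsub2 : Γ.Span (N ∪ {d}) ⊆ Γ.Pperp e := by
            refine Γ.span_min (Γ.pperp_subspace e) ?_
            rintro x (hx | rfl)
            · exact hNe x hx
            · exact hde'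
          exact fun m hm => hsub2 (hsub1 hm)
        have heM : e ∈ M₀ := Γ.gen_absorb hM₀ (fun m hm => Γ.collin_symm (hMe m hm))
        have hsub3 : M₀ ⊆ Γ.Span (N ∪ {e}) := Γ.hyp_span hM₀.1 hhyp heM heN
        have hsub4 : Γ.Span (N ∪ {e}) ⊆ Γ.Pperp c := by
          refine Γ.span_min (Γ.pperp_subspace c) ?_
          rintro x (hx | rfl)
          · exact Γ.collin_symm (hc x hx)
          · exact Γ.collin_symm hce
        exact hcd (Γ.collin_symm (hsub4 (hsub3 hdM)))
      exact (Γ.span_subspace (N ∪ {c})) t ht e ⟨het, Γ.subset_span (Or.inl heN)⟩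
        c ⟨hct, hcSpan⟩ hece hzt
    · exact absurd (Γ.collin_symm (hall c hct)) hcd

/-- Nested sub-generators coincide. -/
theorem subgen_nested {N₁ N₂ : Set Γ.P} (h₁ : Γ.IsSubGen N₁) (h₂ : Γ.IsSubGen N₂)
    (hsub : N₁ ⊆ N₂) : N₂ ⊆ N₁ := by
  intro ζ hζ
  by_contra hζ₁
  obtain ⟨M₂, hM₂, hhyp₂⟩ := h₂
  have hζc : ∀ n ∈ N₁, Γ.Collin ζ n :=
    fun n hn => hM₂.1.2 ζ (hhyp₂.1 hζ) n (hhyp₂.1 (hsub hn))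
  have hG := Γ.span_gen h₁ hζc hζ₁
  have hGsub : Γ.Span (N₁ ∪ {ζ}) ⊆ N₂ := by
    refine Γ.span_min hhyp₂.2.2.1 ?_
    rintro x (hx | rfl)
    · exact hsub hx
    · exact hζ
  have heq := hG.2 M₂ hM₂.1 (hGsub.trans hhyp₂.1)
  have hM₂N₂ : M₂ ⊆ N₂ := by rw [heq]; exact hGsub
  exact hhyp₂.2.1 (subset_antisymm hhyp₂.1 hM₂N₂)

/-- From a hyperplane and a larger subspace: perps of points of the larger
subspace outside the hyperplane stay inside the larger subspace. -/
theorem hyp_ext {H X₂ : Set Γ.P} (hHs : Γ.IsSubspace H)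
    (hHm : ∀ ℓ ∈ Γ.Lines, (ℓ ∩ H).Nonempty) (hX₂ : Γ.IsSubspace X₂)
    (hsub : H ⊆ X₂) {q : Γ.P} (hqX : q ∈ X₂) (hqH : q ∉ H) {c : Γ.P}
    (hc : Γ.Collin c q) : c ∈ X₂ := by
  rcases hc with rfl | ⟨L, hL, hcL, hqL⟩
  · exact hqX
  obtain ⟨h, hhL, hhH⟩ := hHm L hL
  have hne : h ≠ q := fun he => hqH (he ▸ hhH)
  exact hX₂ L hL h ⟨hhL, hsub hhH⟩ q ⟨hqL, hqX⟩ hne hcL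

theorem third_point {ℓ : Set Γ.P} (hℓ : ℓ ∈ Γ.Lines) (u v : Γ.P) :
    ∃ w ∈ ℓ, w ≠ u ∧ w ≠ v := by
  obtain ⟨p₁, p₂, p₃, h₁, h₂, h₃, h₁₂, h₁₃, h₂₃⟩ := Γ.thick_lines ℓ hℓ
  by_cases e₁ : p₁ ≠ u ∧ p₁ ≠ v
  · exact ⟨p₁, h₁, e₁⟩
  by_cases e₂ : p₂ ≠ u ∧ p₂ ≠ v
  · exact ⟨p₂, h₂, e₂⟩
  push_neg at e₁ e₂
  by_cases h1u : p₁ = u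
  · have h2v : p₂ = v := e₂ (fun h => h₁₂ (h1u.trans h.symm))
    exact ⟨p₃, h₃, h1u ▸ Ne.symm h₁₃, h2v ▸ Ne.symm h₂₃⟩
  · have h1v : p₁ = v := e₁ h1u
    by_cases h2u : p₂ = u
    · exact ⟨p₃, h₃, h2u ▸ Ne.symm h₂₃, h1v ▸ Ne.symm h₁₃⟩
    · exact absurd (h1v.trans (e₂ h2u).symm) h₁₂

theorem no_gen_in_perp {a b : Γ.P} (hab : ¬ Γ.Collin a b) {G : Set Γ.P}
    (hG : Γ.IsGenerator G) (hsub : ∀ g ∈ G, Γ.Collin g a ∧ Γ.Collin g b) :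
    False := by
  have haG : a ∈ G := Γ.gen_absorb hG (fun g hg => Γ.collin_symm (hsub g hg).1)
  exact hab (hsub a haG).2

theorem absorb_in_H {H : Set Γ.P} (hH : Γ.IsHyperplane H) {a b : Γ.P}
    (hab : ¬ Γ.Collin a b)
    (hX : ∀ c, c ∈ H ↔ (Γ.Collin c a ∧ Γ.Collin c b))
    {N : Set Γ.P} (hNsg : Γ.IsSubGen N) (hNH : N ⊆ H)
    {ζ : Γ.P} (hζH : ζ ∈ H) (hζN : ∀ n ∈ N, Γ.Collin ζ n) : ζ ∈ N := by
  by_contra h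
  have hG := Γ.span_gen hNsg hζN h
  have hGH : Γ.Span (N ∪ {ζ}) ⊆ H := by
    refine Γ.span_min hH.1 ?_
    rintro x (hx | rfl)
    · exact hNH hx
    · exact hζH
  exact Γ.no_gen_in_perp hab hG (fun g hg => (hX g).1 (hGH hg))

theorem cross_perp {H : Set Γ.P} (hH : Γ.IsHyperplane H)
    (hcentric : ∀ a b c : Γ.P, ∃ N : Set Γ.P, Γ.IsSubGen N ∧ N ⊆ Γ.perp {a, b, c})
    {a b : Γ.P} (hab : ¬ Γ.Collin a b)
    (hX : ∀ c, c ∈ H ↔ (Γ.Collin c a ∧ Γ.Collin c b))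
    {w : Γ.P} (hw2 : ∀ c, Γ.Collin c w → Γ.Collin c b → c ∈ H) :
    ∀ ζ ∈ H, Γ.Collin ζ w := by
  intro ζ hζ
  by_contra hζw
  obtain ⟨N, hNsg, hNp⟩ := hcentric w b ζ
  have hmem : ∀ n ∈ N, Γ.Collin n w ∧ Γ.Collin n b ∧ Γ.Collin n ζ := by
    intro n hn
    exact ⟨hNp hn w (by simp), hNp hn b (by simp), hNp hn ζ (by simp)⟩
  have hNH : ∀ n ∈ N, n ∈ H := fun n hn => hw2 n (hmem n hn).1 (hmem n hn).2.1
  have hζN : ζ ∉ N := fun h => hζw (hmem ζ h).1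
  have hG := Γ.span_gen hNsg (fun n hn => Γ.collin_symm (hmem n hn).2.2) hζN
  have hGH : Γ.Span (N ∪ {ζ}) ⊆ H := by
    refine Γ.span_min hH.1 ?_
    rintro x (hx | rfl)
    · exact hNH x hx
    · exact hζ
  exact Γ.no_gen_in_perp hab hG (fun g hg => (hX g).1 (hGH hg))

theorem cross_step {H : Set Γ.P} (hH : Γ.IsHyperplane H)
    (hcentric : ∀ a b c : Γ.P, ∃ N : Set Γ.P, Γ.IsSubGen N ∧ N ⊆ Γ.perp {a, b, c})
    {a b : Γ.P} (hab : ¬ Γ.Collin a b)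
    (hX : ∀ c, c ∈ H ↔ (Γ.Collin c a ∧ Γ.Collin c b))
    {u v : Γ.P} (hu2 : ∀ c, Γ.Collin c u → Γ.Collin c b → c ∈ H)
    (hu3 : ∀ ζ ∈ H, Γ.Collin ζ u)
    (huv : Γ.Collin u v) (hv : v ∉ H) :
    (∀ c, Γ.Collin c v → Γ.Collin c b → c ∈ H) ∧ (∀ ζ ∈ H, Γ.Collin ζ v) := by
  have h2 : ∀ c, Γ.Collin c v → Γ.Collin c b → c ∈ H := by
    intro c hcv hcb
    by_contra hcH
    have hcu : c ∈ Γ.Pperp u :=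
      Γ.hyp_ext hH.1 hH.2.2 (Γ.pperp_subspace u) (fun ζ hζ => hu3 ζ hζ)
        (Γ.collin_symm huv : v ∈ Γ.Pperp u) hv hcv
    exact hcH (hu2 c hcu hcb)
  exact ⟨h2, Γ.cross_perp hH hcentric hab hX h2⟩

end PolarSpace


/-- Let `S` be a non-degenerate thick-lined polar space of finite
rank `≥ 2` (every singular subspace lies in a generator) in which every triad is
centric: for any three points `a, b, c`, the set `{a,b,c}^⊥` contains a
sub-generator. Then `S` satisfies property (B): every hyperplane `H` containing
`{a,b}^⊥` for two non-collinear points `a, b` contains a generator of `S`. -/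
theorem stmt18 (Γ : PolarSpace)
    (hfinrank : ∀ X : Set Γ.P, Γ.IsSingular X → ∃ M, Γ.IsGenerator M ∧ X ⊆ M)
    (hcentric : ∀ a b c : Γ.P, ∃ N : Set Γ.P,
      Γ.IsSubGen N ∧ N ⊆ Γ.perp {a, b, c}) :
    ∀ H : Set Γ.P, Γ.IsHyperplane H → ∀ a b : Γ.P, ¬ Γ.Collin a b →
      Γ.perp {a, b} ⊆ H → ∃ M : Set Γ.P, Γ.IsGenerator M ∧ M ⊆ H := by
  intro H hH a b hab hsub
  by_cases hc : ∃ c, c ∈ H ∧ c ∉ Γ.perp {a, b}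
  · -- Step I: there is a point of `H` outside `{a,b}^⊥`; span a sub-generator
    -- of `{a,b,c}^⊥` with `c` to get a generator inside `H`.
    obtain ⟨c, hcH, hcX⟩ := hc
    obtain ⟨N, hNsg, hNp⟩ := hcentric a b c
    have hmem : ∀ n ∈ N, Γ.Collin n a ∧ Γ.Collin n b ∧ Γ.Collin n c :=
      fun n hn => ⟨hNp hn a (by simp), hNp hn b (by simp), hNp hn c (by simp)⟩
    have hperp2 : ∀ n, Γ.Collin n a → Γ.Collin n b → n ∈ Γ.perp {a, b} := by
      intro n h1 h2 y hy
      rcases hy with rfl | hy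
      · exact h1
      · rw [Set.mem_singleton_iff] at hy; exact hy ▸ h2
    have hcN : c ∉ N := fun h => hcX (hperp2 c (hmem c h).1 (hmem c h).2.1)
    refine ⟨Γ.Span (N ∪ {c}),
      Γ.span_gen hNsg (fun n hn => Γ.collin_symm (hmem n hn).2.2) hcN,
      Γ.span_min hH.1 ?_⟩
    rintro x (hx | rfl)
    · exact hsub (hperp2 x (hmem x hx).1 (hmem x hx).2.1)
    · exact hcH
  · -- Step II: otherwise `H = {a,b}^⊥`; derive a contradiction.
    exfalso
    push_neg at hc
    have hperp2 : ∀ n, Γ.Collin n a → Γ.Collin n b → n ∈ Γ.perp {a, b} := by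
      intro n h1 h2 y hy
      rcases hy with rfl | hy
      · exact h1
      · rw [Set.mem_singleton_iff] at hy; exact hy ▸ h2
    have hX : ∀ c, c ∈ H ↔ (Γ.Collin c a ∧ Γ.Collin c b) := by
      intro c
      constructor
      · intro hch
        exact ⟨hc c hch a (by simp), hc c hch b (by simp)⟩
      · intro h
        exact hsub (hperp2 c h.1 h.2)
    have haH : a ∉ H := fun h => hab ((hX a).1 h).2
    obtain ⟨N, hNsg, hNp⟩ := hcentric a b a
    have hmem : ∀ n ∈ N, Γ.Collin n a ∧ Γ.Collin n b :=
      fun n hn => ⟨hNp hn a (by simp), hNp hn b (by simp)⟩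
    have hNH : N ⊆ H := fun n hn => (hX n).2 (hmem n hn)
    have haN : a ∉ N := fun h => haH (hNH h)
    have hNpair : ∀ x ∈ N, ∀ y ∈ N, Γ.Collin x y := by
      obtain ⟨M₀, hM₀, hhyp₀⟩ := hNsg
      exact fun x hx y hy => hM₀.1.2 x (hhyp₀.1 hx) y (hhyp₀.1 hy)
    have hpairNa : ∀ x ∈ N ∪ {a}, ∀ y ∈ N ∪ {a}, Γ.Collin x y := by
      rintro x (hx | rfl) y (hy | rfl)
      · exact hNpair x hx y hy
      · exact (hmem x hx).1
      · exact Γ.collin_symm (hmem y hy).1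
      · exact Γ.collin_refl _
    have hGgen := Γ.span_gen hNsg (fun n hn => Γ.collin_symm (hmem n hn).1) haN
    have haG : a ∈ Γ.Span (N ∪ {a}) := Γ.subset_span (Or.inr rfl)
    -- the generator `Span (N ∪ {a})` has a second point
    have hg : ∃ g ∈ Γ.Span (N ∪ {a}), g ≠ a := by
      by_contra h
      push_neg at h
      obtain ⟨ℓ₀, hℓ₀, haℓ₀⟩ := Γ.point_on_line a
      obtain ⟨q₀, hq₀ℓ, hq₀a, _⟩ := Γ.third_point hℓ₀ a a
      have hpair₀ : ∀ x ∈ ({a, q₀} : Set Γ.P), ∀ y ∈ ({a, q₀} : Set Γ.P),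
          Γ.Collin x y := by
        intro x hx y hy
        have hx' : x ∈ ℓ₀ := by
          rcases hx with rfl | hx
          · exact haℓ₀
          · rw [Set.mem_singleton_iff] at hx; exact hx ▸ hq₀ℓ
        have hy' : y ∈ ℓ₀ := by
          rcases hy with rfl | hy
          · exact haℓ₀
          · rw [Set.mem_singleton_iff] at hy; exact hy ▸ hq₀ℓ
        exact Γ.collin_line hℓ₀ hx' hy'
      have hS := Γ.span_singular hpair₀
      have heq := hGgen.2 _ hS (by
        intro g hgG
        have hga : g = a := h g hgG
        rw [hga]
        exact Γ.subset_span (Set.mem_insert a {q₀}))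
      have hq₀G : q₀ ∈ Γ.Span (N ∪ {a}) := by
        rw [← heq]
        exact Γ.subset_span (by simp)
      exact hq₀a (h q₀ hq₀G)
    obtain ⟨g, hgG, hga⟩ := hg
    have hcol : Γ.Collin a g := hGgen.1.2 a haG g hgG
    rcases hcol with h | ⟨L₀, hL₀, hal, hgl⟩
    · exact hga h.symm
    have hlG : L₀ ⊆ Γ.Span (N ∪ {a}) :=
      hGgen.1.1 L₀ hL₀ a ⟨hal, haG⟩ g ⟨hgl, hgG⟩ (fun h => hga h.symm)
    obtain ⟨ν, hνmem⟩ := hH.2.2 L₀ hL₀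
    have hνl : ν ∈ L₀ := hνmem.1
    have hνH : ν ∈ H := hνmem.2
    have hGperpN : ∀ z ∈ Γ.Span (N ∪ {a}), ∀ n ∈ N, Γ.Collin z n :=
      fun z hz n hn => Γ.span_perp hpairNa z hz n (Or.inl hn)
    have hνN : ν ∈ N :=
      Γ.absorb_in_H hH hab hX hNsg hNH hνH (hGperpN ν (hlG hνl))
    obtain ⟨ω, hωl, hωa, hων⟩ := Γ.third_point hL₀ a ν
    have hωG : ω ∈ Γ.Span (N ∪ {a}) := hlG hωl
    have hωH : ω ∉ H := by
      intro h
      have hωN : ω ∈ N := Γ.absorb_in_H hH hab hX hNsg hNH h (hGperpN ω hωG)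
      have hNsub : Γ.IsSubspace N := by
        obtain ⟨M₀, _, hhyp₀⟩ := hNsg
        exact hhyp₀.2.2.1
      have hlN : L₀ ⊆ N := hNsub L₀ hL₀ ω ⟨hωl, hωN⟩ ν ⟨hνl, hνN⟩ hων
      exact haH (hNH (hlN hal))
    have ha2 : ∀ c, Γ.Collin c a → Γ.Collin c b → c ∈ H :=
      fun c h1 h2 => (hX c).2 ⟨h1, h2⟩
    have ha3 : ∀ ζ ∈ H, Γ.Collin ζ a := fun ζ h => ((hX ζ).1 h).1
    have hω23 := Γ.cross_step hH hcentric hab hX ha2 ha3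
      (Γ.collin_line hL₀ hal hωl) hωH
    by_cases hHN : ∀ x ∈ H, x ∈ N
    · -- here `H` is itself singular (equal to `N`): contradiction with
      -- non-degeneracy at `ν`.
      obtain ⟨s, hs⟩ := Γ.nondegenerate ν
      have hs' : ¬ Γ.Collin ν s := hs
      have hHν : H ⊆ Γ.Pperp ν := fun x hx => hNpair x (hHN x hx) ν hνN
      obtain ⟨N₂, hN₂sg, hN₂p⟩ := hcentric s ν ν
      have hmem₂ : ∀ n ∈ N₂, Γ.Collin n s ∧ Γ.Collin n ν :=
        fun n hn => ⟨hN₂p hn s (by simp), hN₂p hn ν (by simp)⟩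
      have hN₂H : ∀ n ∈ N₂, n ∈ H := by
        intro n hn
        by_contra hnH
        have hsν : s ∈ Γ.Pperp ν :=
          Γ.hyp_ext hH.1 hH.2.2 (Γ.pperp_subspace ν) hHν
            ((hmem₂ n hn).2 : n ∈ Γ.Pperp ν) hnH (Γ.collin_symm (hmem₂ n hn).1)
        exact hs' (Γ.collin_symm hsν)
      have hN₂N : N₂ ⊆ N := fun n hn => hHN n (hN₂H n hn)
      have hNN₂ : N ⊆ N₂ := Γ.subgen_nested hN₂sg hNsg hN₂N
      exact hs' (hmem₂ ν (hNN₂ hνN)).1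
    · push_neg at hHN
      obtain ⟨x, hxH, hxN⟩ := hHN
      have hν₂ : ∃ ν₂ ∈ N, ¬ Γ.Collin x ν₂ := by
        by_contra h
        push_neg at h
        exact hxN (Γ.absorb_in_H hH hab hX hNsg hNH hxH h)
      obtain ⟨ν₂, hν₂N, hxν₂⟩ := hν₂
      have hxω : Γ.Collin x ω := hω23.2 x hxH
      have hωx : ω ≠ x := fun h => hωH (h ▸ hxH)
      rcases hxω with h | ⟨β, hβ, hxβ, hωβ⟩
      · exact hωx h.symm
      obtain ⟨σ, hσβ, hσx, hσω⟩ := Γ.third_point hβ x ω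
      have hσH : σ ∉ H := by
        intro h
        have hβH : β ⊆ H := hH.1 β hβ σ ⟨hσβ, h⟩ x ⟨hxβ, hxH⟩ hσx
        exact hωH (hβH hωβ)
      have hσ23 := Γ.cross_step hH hcentric hab hX hω23.1 hω23.2
        (Γ.collin_line hβ hωβ hσβ) hσH
      have h1 : Γ.Collin ν₂ ω := hω23.2 ν₂ (hNH hν₂N)
      have h2 : Γ.Collin ν₂ σ := hσ23.2 ν₂ (hNH hν₂N)
      have hfin := Γ.one_two_all hβ hωβ hσβ (fun h => hσω h.symm) h1 h2 x hxβ
      exact hxν₂ (Γ.collin_symm hfin)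
end
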